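/- arXiv:1112.3111 — 4 statements merged into one kernel-verified Lean document; each statement's English description precedes it below -/
import Mathlib

section
/- For any Y ∈ (1,2), ∑_{n=1}^∞ Γ(n − Y + 1)/n! = −Γ(1 − Y), where the series converges absolutely. -/
open Real Filter Topology

theorem stmt_1 (Y : ℝ) (hY : Y ∈ Set.Ioo (1:ℝ) 2) :
    Summable (fun n : ℕ => Real.Gamma ((n : ℝ) + 1 - Y + 1) / (Nat.factorial (n + 1) : ℝ)) ∧
    ∑' n : ℕ, Real.Gamma ((n : ℝ) + 1 - Y + 1) / (Nat.factorial (n + 1) : ℝ) =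
      -Real.Gamma (1 - Y) := by
  obtain ⟨hY1, hY2⟩ := hY
  set g : ℕ → ℝ := fun n => Real.Gamma ((n : ℝ) + 1 - Y + 1) / (Nat.factorial (n + 1) : ℝ) with hg
  set f : ℕ → ℝ := fun n => Real.Gamma ((n : ℝ) + 2 - Y) / ((Y - 1) * (Nat.factorial n : ℝ)) with hf
  have hY1' : (0:ℝ) < Y - 1 := by linarith
  have hGpos : ∀ n : ℕ, 0 < Real.Gamma ((n : ℝ) + 2 - Y) := fun n =>
    Real.Gamma_pos_of_pos (by have := Nat.cast_nonneg (α := ℝ) n; linarith)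
  have hfacpos : ∀ n : ℕ, (0:ℝ) < (Nat.factorial n : ℝ) := fun n => by
    exact_mod_cast Nat.factorial_pos n
  have hgpos : ∀ n, 0 < g n := fun n => by
    simp only [hg]
    apply div_pos
    · apply Real.Gamma_pos_of_pos; have := Nat.cast_nonneg (α := ℝ) n; linarith
    · exact hfacpos (n+1)
  have hfpos : ∀ n, 0 < f n := fun n => by
    simp only [hf]; exact div_pos (hGpos n) (by positivity)
  have hstep : ∀ n, g n = f n - f (n + 1) := by
    intro n
    have hrec : Real.Gamma ((n:ℝ) + 2 - Y + 1) = ((n:ℝ) + 2 - Y) * Real.Gamma ((n:ℝ) + 2 - Y) :=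
      Real.Gamma_add_one (by have := Nat.cast_nonneg (α := ℝ) n; nlinarith)
    have hfac : (Nat.factorial (n+1) : ℝ) = ((n:ℝ) + 1) * (Nat.factorial n : ℝ) := by
      rw [Nat.factorial_succ]; push_cast; ring
    have h1 : ((n+1:ℕ):ℝ) + 2 - Y = (n:ℝ) + 2 - Y + 1 := by push_cast; ring
    have h2 : ((n:ℝ) + 1 - Y + 1) = (n:ℝ) + 2 - Y := by ring
    simp only [hg, hf, h1, h2, hrec, hfac]
    have hn1 : ((n:ℝ) + 1) ≠ 0 := by positivity
    field_simp
    ring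
  have htel : ∀ N, ∑ i ∈ Finset.range N, g i = f 0 - f N := by
    intro N
    calc ∑ i ∈ Finset.range N, g i = ∑ i ∈ Finset.range N, (f i - f (i+1)) := by
          exact Finset.sum_congr rfl fun i _ => hstep i
      _ = f 0 - f N := Finset.sum_range_sub' f N
  have hsum : Summable g := by
    apply summable_of_sum_range_le (c := f 0) (fun n => (hgpos n).le)
    intro N
    rw [htel N]
    linarith [hfpos N]
  set S := ∑' n, g n with hS
  have htend : Tendsto (fun N => ∑ i ∈ Finset.range N, g i) atTop (𝓝 S) :=
    hsum.hasSum.tendsto_sum_nat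
  have hftend : Tendsto f atTop (𝓝 (f 0 - S)) := by
    have : Tendsto (fun N => f 0 - ∑ i ∈ Finset.range N, g i) atTop (𝓝 (f 0 - S)) :=
      tendsto_const_nhds.sub htend
    refine this.congr fun N => by rw [htel N]; ring
  have hL0 : f 0 - S = 0 := by
    by_contra hne
    have hLpos : 0 < f 0 - S := lt_of_le_of_ne (ge_of_tendsto' hftend fun n => (hfpos n).le) (Ne.symm hne)
    have hanti : Antitone f := antitone_nat_of_succ_le fun n => by
      have := hgpos n; rw [hstep n] at this; linarith
    have hge : ∀ n, f 0 - S ≤ f n := fun n =>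
      le_of_tendsto hftend (Filter.eventually_atTop.2 ⟨n, fun m hm => hanti hm⟩)
    -- g n = f n * (Y-1)/(n+1) ≥ (f0-S)(Y-1)/(n+1)
    have hgge : ∀ n : ℕ, (f 0 - S) * (Y - 1) / ((n:ℝ) + 1) ≤ g n := by
      intro n
      have heq : g n = f n * (Y - 1) / ((n:ℝ) + 1) := by
        simp only [hg, hf]
        have hfac : (Nat.factorial (n+1) : ℝ) = ((n:ℝ) + 1) * (Nat.factorial n : ℝ) := by
          rw [Nat.factorial_succ]; push_cast; ring
        have h2 : ((n:ℝ) + 1 - Y + 1) = (n:ℝ) + 2 - Y := by ring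
        rw [h2, hfac]
        have hn1 : ((n:ℝ) + 1) ≠ 0 := by positivity
        field_simp
      rw [heq]
      apply div_le_div_of_nonneg_right ?_ (by positivity) |>.trans_eq rfl
      · exact mul_le_mul_of_nonneg_right (hge n) hY1'.le
  -- contradiction: harmonic series
    have hsum2 : Summable (fun n : ℕ => (f 0 - S) * (Y - 1) / ((n:ℝ) + 1)) :=
      Summable.of_nonneg_of_le (fun n => by positivity) hgge hsum
    have hsum3 : Summable (fun n : ℕ => 1 / ((n:ℝ) + 1)) := by
      have := hsum2.mul_left (((f 0 - S) * (Y - 1))⁻¹)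
      refine this.congr fun n => ?_
      field_simp
    have hnot : ¬ Summable (fun n : ℕ => 1 / ((n:ℝ) + 1)) := by
      intro h
      apply Real.not_summable_one_div_natCast
      rw [← summable_nat_add_iff 1]
      exact h.congr fun n => by push_cast; ring
    exact hnot hsum3
  have hSval : S = f 0 := by linarith
  refine ⟨hsum, ?_⟩
  rw [hSval]
  simp only [hf]
  have hG2 : Real.Gamma ((0:ℕ) + 2 - Y) = (1 - Y) * Real.Gamma (1 - Y) := by
    have : ((0:ℕ):ℝ) + 2 - Y = (1 - Y) + 1 := by push_cast; ring
    rw [this, Real.Gamma_add_one (by linarith)]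
  rw [hG2]
  simp [Nat.factorial]
  field_simp
  ring
end

section
/- Let Z be a real random variable whose probability density p_Z satisfies p_Z(v) ≤ R v^{−Y−1} for all v ≥ H, where R, H > 0 and Y ∈ (1,2). Then for all 0 < t ≤ 1 and y > 0, t^{Y/2−1}·t^{1/Y−1/2}·∫_{t^{1/2−1/Y} y}^{∞} u p_Z(u) du ≤ (R/(Y−1) + H^{Y}) · y^{1−Y}. -/
open Real MeasureTheory Set

theorem stmt_6 (pZ : ℝ → ℝ) (R H Y : ℝ) (hR : 0 < R) (hH : 0 < H)
    (hY : Y ∈ Set.Ioo (1:ℝ) 2)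
    (hmeas : Measurable pZ) (hnonneg : ∀ v, 0 ≤ pZ v)
    (hInt : Integrable pZ) (hdensity : ∫ v : ℝ, pZ v = 1)
    (hbound : ∀ v : ℝ, H ≤ v → pZ v ≤ R * v ^ (-Y - 1)) :
    ∀ t y : ℝ, 0 < t → t ≤ 1 → 0 < y →
      t ^ (Y/2 - 1) * t ^ (1/Y - 1/2) *
          ∫ u in Set.Ioi (t ^ ((1:ℝ)/2 - 1/Y) * y), u * pZ u ≤
        (R / (Y - 1) + H ^ Y) * y ^ (1 - Y) := by
  obtain ⟨hY1, hY2⟩ := hY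
  intro t y ht ht1 hy
  have hYpos : (0:ℝ) < Y := by linarith
  set e : ℝ := (1:ℝ)/2 - 1/Y with he
  set a : ℝ := t ^ e * y with ha
  have ha0 : 0 < a := mul_pos (rpow_pos_of_pos ht _) hy
  set b : ℝ := max a H with hb
  have hb0 : 0 < b := lt_of_lt_of_le ha0 (le_max_left _ _)
  have hbH : H ≤ b := le_max_right _ _
  have hab : a ≤ b := le_max_left _ _
  -- pointwise bound on Ioi b
  have hpt : ∀ u ∈ Set.Ioi b, u * pZ u ≤ R * u ^ (-Y) := by
    intro u hu
    have hu0 : 0 < u := hb0.trans hu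
    have hHu : H ≤ u := hbH.trans (le_of_lt hu)
    calc u * pZ u ≤ u * (R * u ^ (-Y - 1)) := by
          exact mul_le_mul_of_nonneg_left (hbound u hHu) hu0.le
      _ = R * u ^ (-Y) := by
          rw [mul_comm u, mul_assoc, ← Real.rpow_add_one hu0.ne']
          norm_num
  -- integrability on Ioi b
  have hIntDom : IntegrableOn (fun u : ℝ => R * u ^ (-Y)) (Set.Ioi b) := by
    exact (integrableOn_Ioi_rpow_of_lt (by linarith) hb0).const_mul R
  have hmeasf : AEStronglyMeasurable (fun u : ℝ => u * pZ u)
      (volume.restrict (Set.Ioi b)) :=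
    (measurable_id.mul hmeas).aestronglyMeasurable
  have hIntbig : IntegrableOn (fun u : ℝ => u * pZ u) (Set.Ioi b) := by
    refine hIntDom.integrable.mono hmeasf ?_
    rw [ae_restrict_iff' measurableSet_Ioi]
    filter_upwards with u hu
    have hu0 : 0 < u := hb0.trans hu
    rw [Real.norm_eq_abs, Real.norm_eq_abs,
      abs_of_nonneg (mul_nonneg hu0.le (hnonneg u)),
      abs_of_nonneg (mul_nonneg hR.le (rpow_pos_of_pos hu0 _).le)]
    exact hpt u hu
  -- integrability on Ioc a b
  have hIntmid : IntegrableOn (fun u : ℝ => u * pZ u) (Set.Ioc a b) := by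
    refine MeasureTheory.Integrable.mono
      ((hInt.const_mul b).integrableOn (s := Set.Ioc a b))
      (measurable_id.mul hmeas).aestronglyMeasurable ?_
    rw [ae_restrict_iff' measurableSet_Ioc]
    filter_upwards with u hu
    rw [Real.norm_eq_abs, Real.norm_eq_abs,
      abs_of_nonneg (mul_nonneg (ha0.trans hu.1).le (hnonneg u)),
      abs_of_nonneg (mul_nonneg (hb0.le) (hnonneg u))]
    exact mul_le_mul_of_nonneg_right hu.2 (hnonneg u)
  -- mid bound
  have hmid : ∫ u in Set.Ioc a b, u * pZ u ≤ b := by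
    calc ∫ u in Set.Ioc a b, u * pZ u ≤ ∫ u in Set.Ioc a b, b * pZ u := by
          refine setIntegral_mono_on hIntmid
            ((hInt.const_mul b).integrableOn) measurableSet_Ioc ?_
          intro u hu
          exact mul_le_mul_of_nonneg_right hu.2 (hnonneg u)
      _ = b * ∫ u in Set.Ioc a b, pZ u := by rw [integral_const_mul]
      _ ≤ b * ∫ u, pZ u := by
          refine mul_le_mul_of_nonneg_left ?_ hb0.le
          exact setIntegral_le_integral hInt (Filter.Eventually.of_forall hnonneg)
      _ = b := by rw [hdensity, mul_one]
  -- big bound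
  have hbig : ∫ u in Set.Ioi b, u * pZ u ≤ R * b ^ (1 - Y) / (Y - 1) := by
    calc ∫ u in Set.Ioi b, u * pZ u ≤ ∫ u in Set.Ioi b, R * u ^ (-Y) :=
          setIntegral_mono_on hIntbig hIntDom measurableSet_Ioi hpt
      _ = R * ∫ u in Set.Ioi b, u ^ (-Y) := by rw [integral_const_mul]
      _ = R * (-b ^ (-Y + 1) / (-Y + 1)) := by
          rw [integral_Ioi_rpow_of_lt (by linarith) hb0]
      _ = R * b ^ (1 - Y) / (Y - 1) := by
          rw [show -Y + 1 = 1 - Y by ring]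
          have h1 : (1:ℝ) - Y ≠ 0 := by intro h; linarith [sub_eq_zero.mp h]
          have h2 : Y - (1:ℝ) ≠ 0 := by intro h; linarith [sub_eq_zero.mp h]
          field_simp
          ring
  -- split integral
  have hsplit : ∫ u in Set.Ioi a, u * pZ u
      = (∫ u in Set.Ioc a b, u * pZ u) + ∫ u in Set.Ioi b, u * pZ u := by
    rw [← Set.Ioc_union_Ioi_eq_Ioi hab]
    exact setIntegral_union (Set.Ioc_disjoint_Ioi le_rfl) measurableSet_Ioi
      hIntmid hIntbig
  -- key bound
  have hkey : ∫ u in Set.Ioi a, u * pZ u ≤ (R / (Y - 1) + H ^ Y) * a ^ (1 - Y) := by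
    rcases le_or_gt H a with hHa | haH
    · have hba : b = a := max_eq_left hHa
      rw [hsplit, hba, Set.Ioc_self, MeasureTheory.setIntegral_empty, zero_add]
      calc ∫ u in Set.Ioi a, u * pZ u ≤ R * a ^ (1 - Y) / (Y - 1) := hba ▸ hbig
        _ = R / (Y - 1) * a ^ (1 - Y) := by ring
        _ ≤ (R / (Y - 1) + H ^ Y) * a ^ (1 - Y) := by
            refine mul_le_mul_of_nonneg_right ?_ (rpow_pos_of_pos ha0 _).le
            nlinarith [Real.rpow_pos_of_pos hH Y]
    · have hbH' : b = H := max_eq_right haH.le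
      have hHa1 : H ^ ((1:ℝ) - Y) ≤ a ^ ((1:ℝ) - Y) :=
        rpow_le_rpow_of_nonpos ha0 haH.le (by linarith)
      have h1 : (H:ℝ) ≤ H ^ Y * a ^ (1 - Y) := by
        calc H = H ^ Y * H ^ ((1:ℝ) - Y) := by
              rw [← Real.rpow_add hH]; norm_num
          _ ≤ H ^ Y * a ^ ((1:ℝ) - Y) :=
              mul_le_mul_of_nonneg_left hHa1 (rpow_pos_of_pos hH _).le
      have h2 : R * H ^ ((1:ℝ) - Y) / (Y - 1) ≤ R * a ^ ((1:ℝ) - Y) / (Y - 1) := by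
        gcongr <;> first | exact hHa1 | linarith
      rw [hsplit, hbH']
      have := hbig
      rw [hbH'] at this hmid
      calc (∫ u in Set.Ioc a H, u * pZ u) + ∫ u in Set.Ioi H, u * pZ u
          ≤ H + R * H ^ (1 - Y) / (Y - 1) := add_le_add hmid this
        _ ≤ H ^ Y * a ^ (1 - Y) + R * a ^ ((1:ℝ) - Y) / (Y - 1) := add_le_add h1 h2
        _ = (R / (Y - 1) + H ^ Y) * a ^ (1 - Y) := by ring
  -- final algebra
  have htp : 0 < t ^ (Y/2 - 1) * t ^ (1/Y - 1/2) :=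
    mul_pos (rpow_pos_of_pos ht _) (rpow_pos_of_pos ht _)
  calc t ^ (Y/2 - 1) * t ^ (1/Y - 1/2) * ∫ u in Set.Ioi a, u * pZ u
      ≤ t ^ (Y/2 - 1) * t ^ (1/Y - 1/2) * ((R / (Y - 1) + H ^ Y) * a ^ (1 - Y)) :=
        mul_le_mul_of_nonneg_left hkey htp.le
    _ = (R / (Y - 1) + H ^ Y) * y ^ (1 - Y) := by
        have hY0 : Y ≠ 0 := ne_of_gt hYpos
        have hexp : t ^ (Y/2 - 1) * t ^ (1/Y - 1/2) * t ^ (e * (1 - Y)) = 1 := by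
          rw [← Real.rpow_add ht, ← Real.rpow_add ht,
            show Y/2 - 1 + (1/Y - 1/2) + e * (1 - Y) = 0 from by
              rw [he]; field_simp; ring,
            Real.rpow_zero]
        rw [ha, Real.mul_rpow (rpow_pos_of_pos ht e).le hy.le,
          ← Real.rpow_mul ht.le]
        calc t ^ (Y/2 - 1) * t ^ (1/Y - 1/2) *
              ((R / (Y - 1) + H ^ Y) * (t ^ (e * (1 - Y)) * y ^ (1 - Y)))
            = (t ^ (Y/2 - 1) * t ^ (1/Y - 1/2) * t ^ (e * (1 - Y))) *
              ((R / (Y - 1) + H ^ Y) * y ^ (1 - Y)) := by ring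
          _ = (R / (Y - 1) + H ^ Y) * y ^ (1 - Y) := by rw [hexp, one_mul]
end

section
/- Under the Black–Scholes model with zero interest rate and spot S₀ = 1, the at-the-money call price satisfies E[(e^{σW_t − σ²t/2} − 1)⁺] = (σ/√(2π)) t^{1/2} − (σ³/(24√(2π))) t^{3/2} + O(t^{5/2}) as t → 0. -/
open Real MeasureTheory Asymptotics Topology Filter ProbabilityTheory
open scoped ENNReal NNReal

lemma exp_neg_bound (x : ℝ) (hx : 0 ≤ x) : |Real.exp (-x) - (1 - x)| ≤ x^2 := by
  have h1 : 1 - x ≤ Real.exp (-x) := by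
    have := Real.add_one_le_exp (-x); linarith
  have h2 : Real.exp (-x) * (1 + x) ≤ 1 := by
    have hx2 := Real.add_one_le_exp x
    calc Real.exp (-x) * (1 + x) ≤ Real.exp (-x) * Real.exp x :=
          mul_le_mul_of_nonneg_left (by linarith) (Real.exp_nonneg _)
      _ = 1 := by rw [← Real.exp_add]; simp
  have h3 : Real.exp (-x) ≤ 1 - x + x^2 := by nlinarith [Real.exp_nonneg (-x)]
  rw [abs_le]; constructor <;> nlinarith

lemma pdf_eq (x : ℝ) :
    gaussianPDFReal 0 1 x = (Real.sqrt (2*π))⁻¹ * Real.exp (-(x^2/2)) := by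
  simp [gaussianPDFReal]
  exact Or.inl (by ring)

lemma gauss_call (θ : ℝ) (hθ : 0 < θ) :
    (∫ x, max (Real.exp (θ * x - θ^2/2) - 1) 0 ∂(gaussianReal 0 1))
      = ∫ u in (-(θ/2))..(θ/2), gaussianPDFReal 0 1 u := by
  have hint : Integrable (gaussianPDFReal 0 1) := integrable_gaussianPDFReal 0 1
  have hints : Integrable (fun x => gaussianPDFReal 0 1 (x - θ)) := hint.comp_sub_right θ
  have hkey : ∀ x : ℝ, gaussianPDFReal 0 1 x * Real.exp (θ * x - θ^2/2)
      = gaussianPDFReal 0 1 (x - θ) := by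
    intro x
    rw [pdf_eq, pdf_eq, mul_assoc, ← Real.exp_add]
    ring_nf
  have h1 : (∫ x, max (Real.exp (θ * x - θ^2/2) - 1) 0 ∂(gaussianReal 0 1))
      = ∫ x, gaussianPDFReal 0 1 x * max (Real.exp (θ * x - θ^2/2) - 1) 0 := by
    rw [gaussianReal_of_var_ne_zero _ one_ne_zero]
    have hd : gaussianPDF 0 1 = fun x => ((gaussianPDFReal 0 1 x).toNNReal : ℝ≥0∞) := rfl
    rw [hd, integral_withDensity_eq_integral_smul
      (measurable_gaussianPDFReal 0 1).real_toNNReal]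
    congr 1
    ext x
    rw [NNReal.smul_def, Real.coe_toNNReal _ (gaussianPDFReal_nonneg 0 1 x), smul_eq_mul]
  have h2 : (fun x => gaussianPDFReal 0 1 x * max (Real.exp (θ * x - θ^2/2) - 1) 0)
      = (Set.Ioi (θ/2)).indicator
          (fun x => gaussianPDFReal 0 1 (x - θ) - gaussianPDFReal 0 1 x) := by
    ext x
    by_cases hx : θ/2 < x
    · rw [Set.indicator_of_mem (Set.mem_Ioi.mpr hx)]
      have hpos : (0:ℝ) ≤ θ * x - θ^2/2 := by nlinarith
      rw [max_eq_left (sub_nonneg.mpr (Real.one_le_exp hpos))]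
      rw [mul_sub, hkey, mul_one]
    · rw [Set.indicator_of_notMem (by simpa using hx)]
      push_neg at hx
      have hle : θ * x - θ^2/2 ≤ 0 := by nlinarith
      rw [max_eq_right (sub_nonpos.mpr (Real.exp_le_one_iff.mpr hle)), mul_zero]
  rw [h1, h2, integral_indicator measurableSet_Ioi,
    integral_sub hints.integrableOn hint.integrableOn]
  have h3 : (∫ x in Set.Ioi (θ/2), gaussianPDFReal 0 1 (x - θ))
      = ∫ x in Set.Ioi (-(θ/2)), gaussianPDFReal 0 1 x := by
    rw [← integral_indicator measurableSet_Ioi, ← integral_indicator measurableSet_Ioi]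
    have hpt : ∀ x : ℝ, (Set.Ioi (θ/2)).indicator (fun y => gaussianPDFReal 0 1 (y - θ)) x
        = (Set.Ioi (-(θ/2))).indicator (gaussianPDFReal 0 1) (x - θ) := by
      intro x
      by_cases hx : θ/2 < x
      · rw [Set.indicator_of_mem (Set.mem_Ioi.mpr hx),
          Set.indicator_of_mem (Set.mem_Ioi.mpr (by linarith))]
      · push_neg at hx
        rw [Set.indicator_of_notMem (by simpa using not_lt.mpr hx),
          Set.indicator_of_notMem (by simp; linarith)]
    simp_rw [hpt]
    exact integral_sub_right_eq_self ((Set.Ioi (-(θ/2))).indicator (gaussianPDFReal 0 1)) θ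
  have hsplit : (∫ x in Set.Ioi (-(θ/2)), gaussianPDFReal 0 1 x)
      = (∫ x in Set.Ioc (-(θ/2)) (θ/2), gaussianPDFReal 0 1 x)
        + ∫ x in Set.Ioi (θ/2), gaussianPDFReal 0 1 x := by
    rw [← Set.Ioc_union_Ioi_eq_Ioi (by linarith : -(θ/2) ≤ θ/2)]
    exact setIntegral_union (Set.Ioc_disjoint_Ioi le_rfl) measurableSet_Ioi
      hint.integrableOn hint.integrableOn
  rw [h3, hsplit, intervalIntegral.integral_of_le (by linarith : -(θ/2) ≤ θ/2)]
  ring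

lemma interval_est (s : ℝ) (hs : 0 ≤ s) :
    |(∫ u in (-s)..s, gaussianPDFReal 0 1 u)
      - (Real.sqrt (2*π))⁻¹ * (2*s - s^3/3)| ≤ (Real.sqrt (2*π))⁻¹ * (s^5/2) := by
  set c : ℝ := (Real.sqrt (2*π))⁻¹ with hc
  have hc0 : 0 ≤ c := by positivity
  have hpoly : (∫ u in (-s)..s, ((1:ℝ) - u^2/2)) = 2*s - s^3/3 := by
    rw [intervalIntegral.integral_sub intervalIntegrable_const
      ((intervalIntegral.intervalIntegrable_pow 2).div_const 2),
      intervalIntegral.integral_div, integral_pow]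
    simp
    ring
  have hmain : c * (2*s - s^3/3) = ∫ u in (-s)..s, c * ((1:ℝ) - u^2/2) := by
    rw [intervalIntegral.integral_const_mul, hpoly]
  have hpint : IntervalIntegrable (gaussianPDFReal 0 1) volume (-s) s :=
    (integrable_gaussianPDFReal 0 1).intervalIntegrable
  have hqint : IntervalIntegrable (fun u : ℝ => c * ((1:ℝ) - u^2/2)) volume (-s) s :=
    (intervalIntegrable_const.sub
      ((intervalIntegral.intervalIntegrable_pow 2).div_const 2)).const_mul c
  rw [hmain, ← intervalIntegral.integral_sub hpint hqint]
  have hbound : ∀ u ∈ Set.uIoc (-s) s,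
      ‖gaussianPDFReal 0 1 u - c * ((1:ℝ) - u^2/2)‖ ≤ c * (s^4/4) := by
    intro u hu
    rw [Set.uIoc_of_le (by linarith : -s ≤ s)] at hu
    have hu2 : u^2 ≤ s^2 := sq_le_sq' hu.1.le hu.2
    rw [pdf_eq, Real.norm_eq_abs, ← mul_sub, abs_mul, abs_of_nonneg hc0]
    refine mul_le_mul_of_nonneg_left ?_ hc0
    have := exp_neg_bound (u^2/2) (by positivity)
    calc |Real.exp (-(u^2/2)) - (1 - u^2/2)| ≤ (u^2/2)^2 := this
      _ ≤ s^4/4 := by nlinarith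
  have := intervalIntegral.norm_integral_le_of_norm_le_const hbound
  rw [Real.norm_eq_abs] at this
  calc |∫ u in (-s)..s, (gaussianPDFReal 0 1 u - c * ((1:ℝ) - u^2/2))|
      ≤ c * (s^4/4) * |s - (-s)| := this
    _ = c * (s^5/2) := by rw [abs_of_nonneg (by linarith : (0:ℝ) ≤ s - (-s))]; ring

theorem stmt_13 (σ : ℝ) (hσ : 0 < σ) :
    (fun t : ℝ => (∫ x, max (Real.exp (σ * Real.sqrt t * x - σ^2 * t / 2) - 1) 0
          ∂(ProbabilityTheory.gaussianReal 0 1)) -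
        (σ / Real.sqrt (2*π) * t ^ ((1:ℝ)/2) -
          σ^3 / (24 * Real.sqrt (2*π)) * t ^ ((3:ℝ)/2)))
      =O[𝓝[>] 0] fun t : ℝ => t ^ ((5:ℝ)/2) := by
  have hsq : (0:ℝ) < Real.sqrt (2*π) := Real.sqrt_pos.mpr (by positivity)
  rw [Asymptotics.isBigO_iff]
  refine ⟨σ^5 / (64 * Real.sqrt (2*π)), ?_⟩
  filter_upwards [self_mem_nhdsWithin] with t ht
  replace ht : 0 < t := ht
  have hst : 0 < Real.sqrt t := Real.sqrt_pos.mpr ht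
  have hθ : 0 < σ * Real.sqrt t := mul_pos hσ hst
  have hr1 : t ^ ((1:ℝ)/2) = Real.sqrt t := (Real.sqrt_eq_rpow t).symm
  have hr3 : t ^ ((3:ℝ)/2) = Real.sqrt t ^ 3 := by
    rw [Real.sqrt_eq_rpow, ← Real.rpow_natCast (t ^ ((1:ℝ)/2)) 3, ← Real.rpow_mul ht.le]
    norm_num
  have hr5 : t ^ ((5:ℝ)/2) = Real.sqrt t ^ 5 := by
    rw [Real.sqrt_eq_rpow, ← Real.rpow_natCast (t ^ ((1:ℝ)/2)) 5, ← Real.rpow_mul ht.le]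
    norm_num
  have hrw : ∀ x : ℝ, σ * Real.sqrt t * x - σ^2 * t / 2
      = σ * Real.sqrt t * x - (σ * Real.sqrt t)^2 / 2 := by
    intro x
    rw [mul_pow, Real.sq_sqrt ht.le]
  have hA : (∫ x, max (Real.exp (σ * Real.sqrt t * x - σ^2 * t / 2) - 1) 0 ∂(gaussianReal 0 1))
      = ∫ u in (-(σ * Real.sqrt t / 2))..(σ * Real.sqrt t / 2), gaussianPDFReal 0 1 u := by
    simp_rw [hrw]
    exact gauss_call _ hθ
  have hmain : σ / Real.sqrt (2*π) * t ^ ((1:ℝ)/2) - σ^3 / (24 * Real.sqrt (2*π)) * t ^ ((3:ℝ)/2)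
      = (Real.sqrt (2*π))⁻¹ * (2*(σ * Real.sqrt t / 2) - (σ * Real.sqrt t / 2)^3/3) := by
    rw [hr1, hr3]; field_simp; ring
  have hest := interval_est (σ * Real.sqrt t / 2) (by positivity)
  rw [hA, hmain, Real.norm_eq_abs, Real.norm_eq_abs, hr5]
  refine hest.trans (le_of_eq ?_)
  rw [abs_of_nonneg (by positivity : (0:ℝ) ≤ Real.sqrt t ^ 5)]
  field_simp
  ring
end

section
/- Suppose a function C(t) of maturity t satisfies C(t) = d₁ t^{1/Y} + d₂ t + o(t) as t → 0, with Y ∈ (1,2), d₁ > 0, d₂ ∈ ℝ, and suppose the implied volatility σ̂(t) is defined by F(σ̂(t)√t) = C(t) where F(θ) = (1/√(2π))∫₀^θ e^{−v²/8} dv. Then σ̂(t) = √(2π) d₁ t^{1/Y − 1/2} + √(2π) d₂ t^{1/2} + o(t^{1/2}) as t → 0. -/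
open Real MeasureTheory Asymptotics Topology Filter

noncomputable def Gfun (θ : ℝ) : ℝ := ∫ v in (0:ℝ)..θ, Real.exp (-v^2/8)

lemma fcont : Continuous (fun v : ℝ => Real.exp (-v^2/8)) := by continuity

lemma fint (a b : ℝ) : IntervalIntegrable (fun v : ℝ => Real.exp (-v^2/8)) volume a b :=
  fcont.intervalIntegrable a b

lemma f_ge (v : ℝ) (hv : |v| ≤ 1) : (7/8:ℝ) ≤ Real.exp (-v^2/8) := by
  have h := Real.add_one_le_exp (-v^2/8)
  have hv2 : v^2 ≤ 1 := by nlinarith [abs_nonneg v, sq_abs v]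
  nlinarith

lemma f_le_one (v : ℝ) : Real.exp (-v^2/8) ≤ 1 := by
  rw [Real.exp_le_one_iff]; nlinarith [sq_nonneg v]

lemma G_odd (θ : ℝ) : Gfun (-θ) = - Gfun θ := by
  unfold Gfun
  have h := intervalIntegral.integral_comp_neg (a := θ) (b := 0) (fun v => Real.exp (-v^2/8))
  simp only [neg_neg, neg_zero, neg_sq] at h
  rw [← h, intervalIntegral.integral_symm]

lemma G_mono {a b : ℝ} (hab : a ≤ b) : Gfun a ≤ Gfun b := by
  unfold Gfun
  rw [← intervalIntegral.integral_add_adjacent_intervals (fint 0 a) (fint a b)]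
  have : 0 ≤ ∫ v in a..b, Real.exp (-v^2/8) :=
    intervalIntegral.integral_nonneg hab (fun v _ => (Real.exp_pos _).le)
  linarith

lemma G_lb {θ : ℝ} (h0 : 0 ≤ θ) (h1 : θ ≤ 1) : 7/8 * θ ≤ Gfun θ := by
  have := intervalIntegral.integral_mono_on (μ := volume) (f := fun _ => (7/8:ℝ))
    (g := fun v : ℝ => Real.exp (-v^2/8)) h0 (intervalIntegrable_const) (fint 0 θ)
    (fun v hv => f_ge v (by rw [abs_le]; constructor <;> [linarith [hv.1]; linarith [hv.2]]))
  simp only [intervalIntegral.integral_const, smul_eq_mul, sub_zero] at this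
  unfold Gfun
  linarith

lemma G_abs_lb (θ : ℝ) (h : |Gfun θ| < 7/8) : |θ| ≤ 8/7 * |Gfun θ| := by
  have key : ∀ x : ℝ, 0 ≤ x → |Gfun x| < 7/8 → |x| ≤ 8/7 * |Gfun x| := by
    intro x hx hGx
    have hx1 : x ≤ 1 := by
      by_contra hc
      push_neg at hc
      have h1 : (7:ℝ)/8 ≤ Gfun 1 := by simpa using G_lb (by norm_num) (le_refl 1)
      have h2 : Gfun 1 ≤ Gfun x := G_mono hc.le
      have : (7:ℝ)/8 ≤ |Gfun x| := le_trans (le_trans h1 h2) (le_abs_self _)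
      linarith
    have hlb := G_lb hx hx1
    have hGnn : 0 ≤ Gfun x := by
      have : Gfun 0 ≤ Gfun x := G_mono hx
      simpa [Gfun] using this
    rw [abs_of_nonneg hx, abs_of_nonneg hGnn]
    linarith
  rcases le_total 0 θ with h0 | h0
  · exact key θ h0 h
  · have := key (-θ) (by linarith) (by rwa [G_odd, abs_neg])
    simpa [G_odd, abs_neg] using this

lemma G_cubic (θ : ℝ) : |θ - Gfun θ| ≤ |θ|^3 / 8 := by
  have hsplit : θ - Gfun θ = ∫ v in (0:ℝ)..θ, (1 - Real.exp (-v^2/8)) := by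
    rw [intervalIntegral.integral_sub intervalIntegrable_const (fint 0 θ)]
    simp [Gfun]
  rw [hsplit]
  have hb : ∀ v ∈ Set.uIoc (0:ℝ) θ, ‖(1 : ℝ) - Real.exp (-v^2/8)‖ ≤ θ^2/8 := by
    intro v hv
    have hv' : |v| ≤ |θ| := by
      have := Set.mem_uIcc.mp (Set.uIoc_subset_uIcc hv)
      rcases this with ⟨h1, h2⟩ | ⟨h1, h2⟩ <;> rw [abs_le] <;>
        constructor <;> [skip; skip; skip; skip] <;>
        cases' le_total 0 θ with h h <;>
        simp [abs_of_nonneg, abs_of_nonpos, h] at * <;> linarith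
    have hv2 : v^2 ≤ θ^2 := by nlinarith [sq_abs v, sq_abs θ, abs_nonneg v]
    have h1 : Real.exp (-v^2/8) ≤ 1 := f_le_one v
    have h2 : 1 - v^2/8 ≤ Real.exp (-v^2/8) := by
      have := Real.add_one_le_exp (-v^2/8); linarith
    rw [Real.norm_eq_abs, abs_of_nonneg (by linarith)]
    linarith
  have := intervalIntegral.norm_integral_le_of_norm_le_const hb
  rw [Real.norm_eq_abs] at this
  calc |∫ v in (0:ℝ)..θ, (1 - Real.exp (-v^2/8))| ≤ θ^2/8 * |θ - 0| := this
    _ = |θ|^3/8 := by rw [sub_zero, ← sq_abs]; ring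


lemma rpow_tendsto {c : ℝ} (hc : 0 < c) :
    Tendsto (fun t : ℝ => t ^ c) (𝓝[>] 0) (𝓝 0) := by
  have h := (Real.continuousAt_rpow_const 0 c (Or.inr hc.le)).tendsto
  rw [Real.zero_rpow hc.ne'] at h
  exact h.mono_left nhdsWithin_le_nhds

theorem stmt_19 (Y d₁ d₂ : ℝ) (hY : Y ∈ Set.Ioo (1:ℝ) 2) (hd₁ : 0 < d₁)
    (Cp iv : ℝ → ℝ)
    (hC : (fun t : ℝ => Cp t - (d₁ * t ^ (1/Y) + d₂ * t)) =o[𝓝[>] 0] fun t : ℝ => t)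
    (hIV : ∀ᶠ t in 𝓝[>] (0:ℝ),
      (1 / Real.sqrt (2*π)) * ∫ v in (0:ℝ)..(iv t * Real.sqrt t), Real.exp (-v^2/8) = Cp t) :
    (fun t : ℝ => iv t -
        (Real.sqrt (2*π) * d₁ * t ^ (1/Y - 1/2) + Real.sqrt (2*π) * d₂ * t ^ ((1:ℝ)/2)))
      =o[𝓝[>] 0] fun t : ℝ => t ^ ((1:ℝ)/2) := by
  obtain ⟨hY1, hY2⟩ := hY
  have hYpos : 0 < Y := by linarith
  set l := 𝓝[>] (0:ℝ) with hl
  have hpos : ∀ᶠ t in l, (0:ℝ) < t := eventually_mem_nhdsWithin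
  have h2π : (0:ℝ) < Real.sqrt (2*π) := Real.sqrt_pos.mpr (by positivity)
  -- G θ = √(2π) Cp t
  have hGθ : ∀ᶠ t in l, Gfun (iv t * Real.sqrt t) = Real.sqrt (2*π) * Cp t := by
    filter_upwards [hIV] with t ht
    unfold Gfun
    rw [← ht]
    field_simp
  -- id tends to 0
  have ht0 : Tendsto (fun t : ℝ => t) l (𝓝 0) := tendsto_id.mono_right nhdsWithin_le_nhds
  -- Cp → 0
  have hCp0 : Tendsto Cp l (𝓝 0) := by
    have h1 : Tendsto (fun t => Cp t - (d₁ * t ^ (1/Y) + d₂ * t)) l (𝓝 0) :=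
      hC.isBigO.trans_tendsto ht0
    have h2 : Tendsto (fun t : ℝ => d₁ * t ^ (1/Y) + d₂ * t) l (𝓝 0) := by
      have := ((rpow_tendsto (by positivity : (0:ℝ) < 1/Y)).const_mul d₁).add (ht0.const_mul d₂)
      simpa using this
    have := h1.add h2
    simpa using this
  have hsmall : ∀ᶠ t in l, Real.sqrt (2*π) * |Cp t| < 7/8 := by
    have h : Tendsto (fun t => Real.sqrt (2*π) * |Cp t|) l (𝓝 0) := by
      have := (hCp0.abs.const_mul (Real.sqrt (2*π)))
      simpa using this
    exact h.eventually_lt_const (by norm_num)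
  -- θ =O Cp
  have hθO : (fun t => iv t * Real.sqrt t) =O[l] Cp := by
    rw [isBigO_iff]
    refine ⟨8/7 * Real.sqrt (2*π), ?_⟩
    filter_upwards [hGθ, hsmall] with t ht hs
    have habs : |Gfun (iv t * Real.sqrt t)| = Real.sqrt (2*π) * |Cp t| := by
      rw [ht, abs_mul, abs_of_pos h2π]
    have := G_abs_lb (iv t * Real.sqrt t) (by rw [habs]; exact hs)
    rw [habs] at this
    simp only [Real.norm_eq_abs]
    linarith
  -- t =o t^{1/Y}
  have h_t_o : (fun t : ℝ => t) =o[l] fun t => t ^ (1/Y) := by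
    have h1 : (fun t : ℝ => t ^ (1 - 1/Y)) =o[l] (fun _ => (1:ℝ)) := by
      rw [isLittleO_one_iff]
      exact rpow_tendsto (by rw [sub_pos, div_lt_one hYpos]; linarith)
    have h2 := h1.mul_isBigO (isBigO_refl (fun t : ℝ => t ^ (1/Y)) l)
    refine h2.congr' ?_ ?_
    · filter_upwards [hpos] with t ht
      rw [← Real.rpow_add ht]
      norm_num
    · filter_upwards with t; simp
  -- Cp =O t^{1/Y}
  have hCpO : Cp =O[l] fun t : ℝ => t ^ (1/Y) := by
    have hm : (fun t : ℝ => d₁ * t ^ (1/Y) + d₂ * t) =O[l] fun t => t ^ (1/Y) :=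
      ((isBigO_refl (fun t : ℝ => t ^ (1/Y)) l).const_mul_left d₁).add
        ((h_t_o.isBigO.const_mul_left d₂))
    have := (hC.isBigO.trans h_t_o.isBigO).add hm
    refine this.congr_left fun t => by ring
  -- (t^{1/Y})^3 =o t
  have hcube_o : (fun t : ℝ => (t ^ (1/Y)) ^ 3) =o[l] fun t : ℝ => t := by
    have h1 : (fun t : ℝ => t ^ (3/Y - 1)) =o[l] (fun _ => (1:ℝ)) := by
      rw [isLittleO_one_iff]
      refine rpow_tendsto ?_
      rw [sub_pos, lt_div_iff₀ hYpos]; linarith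
    have h2 := h1.mul_isBigO (isBigO_refl (fun t : ℝ => t) l)
    refine h2.congr' ?_ ?_
    · filter_upwards [hpos] with t ht
      have e1 : (t ^ (1/Y)) ^ 3 = t ^ (1/Y) * (t ^ (1/Y) * t ^ (1/Y)) := by ring
      rw [e1, ← Real.rpow_add ht, ← Real.rpow_add ht,
        show 1/Y + (1/Y + 1/Y) = (3/Y - 1) + 1 by ring, Real.rpow_add ht, Real.rpow_one]
    · filter_upwards with t; simp
  -- θ - Gθ =o t
  have hRes : (fun t => iv t * Real.sqrt t - Gfun (iv t * Real.sqrt t)) =o[l] fun t : ℝ => t := by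
    have hO : (fun t => iv t * Real.sqrt t - Gfun (iv t * Real.sqrt t)) =O[l]
        fun t => (iv t * Real.sqrt t) ^ 3 := by
      rw [isBigO_iff]
      refine ⟨1/8, ?_⟩
      filter_upwards with t
      have := G_cubic (iv t * Real.sqrt t)
      simp only [Real.norm_eq_abs, abs_pow]
      linarith
    exact (hO.trans ((hθO.pow 3).trans (hCpO.pow 3))).trans_isLittleO hcube_o
  -- main o(t) estimate
  have hMain : (fun t => iv t * Real.sqrt t -
      (Real.sqrt (2*π) * (d₁ * t ^ (1/Y) + d₂ * t))) =o[l] fun t : ℝ => t := by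
    have hsum := hRes.add (hC.const_mul_left (Real.sqrt (2*π)))
    refine (hsum.congr' ?_ (by rfl))
    filter_upwards [hGθ] with t ht
    rw [ht]; ring
  -- divide by √t
  have hdiv := hMain.mul_isBigO (isBigO_refl (fun t : ℝ => (Real.sqrt t)⁻¹) l)
  have key2 : ∀ t : ℝ, 0 < t → t * (Real.sqrt t)⁻¹ = t ^ ((1:ℝ)/2) := by
    intro t ht
    rw [Real.sqrt_eq_rpow, ← Real.rpow_neg ht.le]
    nth_rewrite 1 [← Real.rpow_one t]
    rw [← Real.rpow_add ht]
    norm_num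
  refine hdiv.congr' ?_ ?_
  · filter_upwards [hpos] with t ht
    have hsne : Real.sqrt t ≠ 0 := by positivity
    have e1 : t ^ (1/Y) * (Real.sqrt t)⁻¹ = t ^ (1/Y - 1/2) := by
      rw [Real.sqrt_eq_rpow, ← Real.rpow_neg ht.le, ← Real.rpow_add ht,
        show 1/Y + -((1:ℝ)/2) = 1/Y - 1/2 by ring]
    have e2 := key2 t ht
    calc (iv t * Real.sqrt t - Real.sqrt (2*π) * (d₁ * t ^ (1/Y) + d₂ * t)) * (Real.sqrt t)⁻¹
        = iv t * (Real.sqrt t * (Real.sqrt t)⁻¹) -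
            (Real.sqrt (2*π) * d₁ * (t ^ (1/Y) * (Real.sqrt t)⁻¹) +
             Real.sqrt (2*π) * d₂ * (t * (Real.sqrt t)⁻¹)) := by ring
      _ = iv t - (Real.sqrt (2*π) * d₁ * t ^ (1/Y - 1/2) +
            Real.sqrt (2*π) * d₂ * t ^ ((1:ℝ)/2)) := by
          rw [mul_inv_cancel₀ hsne, e1, e2, mul_one]
  · filter_upwards [hpos] with t ht
    exact key2 t ht
end
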